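/- Let f : ℝ^D → ℝ be differentiable with L-Lipschitz gradient, i.e. ‖∇f(x) − ∇f(y)‖ ≤ L‖x − y‖ for all x, y ∈ ℝ^D. Let μ ∈ ℝ^D, σ > 0, and let ξ ~ N(μ, σ²I_D). Then ∇f(ξ) is integrable and ‖E[∇f(ξ)] − ∇f(μ)‖ ≤ Lσ√D. -/

import Mathlib

open MeasureTheory
open scoped RealInnerProductSpace

/-- The density of the Gaussian distribution `N(μ, σ²I_D)` on `ℝ^D`. -/
noncomputable def gaussDensity {D : ℕ} (μ : EuclideanSpace ℝ (Fin D)) (σ : ℝ)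
    (x : EuclideanSpace ℝ (Fin D)) : ℝ :=
  ((Real.sqrt (2 * Real.pi) * σ) ^ D)⁻¹ * Real.exp (-‖x - μ‖ ^ 2 / (2 * σ ^ 2))

open Real

lemma integrable_sq_gauss {b : ℝ} (hb : 0 < b) :
    Integrable (fun x : ℝ => x ^ 2 * Real.exp (-b * x ^ 2)) := by
  have := integrable_rpow_mul_exp_neg_mul_sq hb (s := 2) (by norm_num)
  have heq : (fun x : ℝ => x ^ (2 : ℝ) * Real.exp (-b * x ^ 2))
      = fun x : ℝ => x ^ 2 * Real.exp (-b * x ^ 2) := by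
    funext x
    rw [show ((2:ℝ)) = ((2:ℕ):ℝ) by norm_num, Real.rpow_natCast]
  rwa [heq] at this

lemma integral_sq_gauss {b : ℝ} (hb : 0 < b) :
    ∫ x : ℝ, x ^ 2 * Real.exp (-b * x ^ 2) = Real.sqrt (π / b) / (2 * b) := by
  have hderiv : ∀ x : ℝ, HasDerivAt (fun x : ℝ => x * Real.exp (-b * x ^ 2))
      (Real.exp (-b * x ^ 2) - 2 * b * (x ^ 2 * Real.exp (-b * x ^ 2))) x := by
    intro x
    have h1 : HasDerivAt (fun x : ℝ => -b * x ^ 2) (-b * (2 * x)) x := by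
      simpa using ((hasDerivAt_pow 2 x).const_mul (-b))
    have h2 := (h1.exp)
    have := (hasDerivAt_id x).mul h2
    convert! this using 1
    simp only [id]
    ring
  have hf' : Integrable (fun x : ℝ =>
      Real.exp (-b * x ^ 2) - 2 * b * (x ^ 2 * Real.exp (-b * x ^ 2))) :=
    (integrable_exp_neg_mul_sq hb).sub ((integrable_sq_gauss hb).const_mul _)
  have hf : Integrable (fun x : ℝ => x * Real.exp (-b * x ^ 2)) :=
    integrable_mul_exp_neg_mul_sq hb
  have h0 := integral_eq_zero_of_hasDerivAt_of_integrable hderiv hf' hf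
  rw [integral_sub (integrable_exp_neg_mul_sq hb) ((integrable_sq_gauss hb).const_mul _),
    integral_gaussian, integral_const_mul, sub_eq_zero] at h0
  field_simp at h0 ⊢
  linarith

noncomputable def oneDim (m σ t : ℝ) : ℝ :=
  (Real.sqrt (2 * Real.pi) * σ)⁻¹ * Real.exp (-(t - m) ^ 2 / (2 * σ ^ 2))

lemma oneDim_eq (m σ t : ℝ) :
    oneDim m σ t = (Real.sqrt (2 * Real.pi) * σ)⁻¹ *
      Real.exp (-(2 * σ ^ 2)⁻¹ * (t - m) ^ 2) := by
  unfold oneDim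
  congr 1
  rw [neg_div, div_eq_inv_mul, neg_mul]

lemma oneDim_nonneg (m : ℝ) {σ : ℝ} (hσ : 0 < σ) (t : ℝ) : 0 ≤ oneDim m σ t := by
  unfold oneDim
  positivity

section OneDim
variable {σ : ℝ} (hσ : 0 < σ)

lemma b_pos (hσ : 0 < σ) : (0:ℝ) < (2 * σ ^ 2)⁻¹ := by positivity

lemma sqrt_pi_div (hσ : 0 < σ) : Real.sqrt (Real.pi / (2 * σ ^ 2)⁻¹) = Real.sqrt (2 * Real.pi) * σ := by
  rw [show Real.pi / (2 * σ ^ 2)⁻¹ = (2 * Real.pi) * σ ^ 2 by field_simp,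
    Real.sqrt_mul (by positivity), Real.sqrt_sq hσ.le]

include hσ

lemma integrable_oneDim (m : ℝ) : Integrable (fun t => oneDim m σ t) := by
  simp only [oneDim_eq]
  have : Integrable (fun t : ℝ => Real.exp (-(2 * σ ^ 2)⁻¹ * t ^ 2)) :=
    integrable_exp_neg_mul_sq (b_pos hσ)
  exact ((this.comp_sub_right m).const_mul _)

lemma integral_oneDim (m : ℝ) : ∫ t, oneDim m σ t = 1 := by
  simp only [oneDim_eq]
  rw [integral_const_mul]
  have : (fun t : ℝ => Real.exp (-(2 * σ ^ 2)⁻¹ * t ^ 2)) ∘ (fun t => t - m)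
      = fun t => Real.exp (-(2 * σ ^ 2)⁻¹ * (t - m) ^ 2) := rfl
  rw [show (∫ t : ℝ, Real.exp (-(2 * σ ^ 2)⁻¹ * (t - m) ^ 2))
      = ∫ t : ℝ, Real.exp (-(2 * σ ^ 2)⁻¹ * t ^ 2) from integral_sub_right_eq_self
        (fun t : ℝ => Real.exp (-(2 * σ ^ 2)⁻¹ * t ^ 2)) m,
    integral_gaussian, sqrt_pi_div hσ]
  field_simp

lemma integrable_oneDim_sq (m : ℝ) :
    Integrable (fun t => oneDim m σ t * (t - m) ^ 2) := by
  simp only [oneDim_eq]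
  have h : Integrable (fun t : ℝ => t ^ 2 * Real.exp (-(2 * σ ^ 2)⁻¹ * t ^ 2)) :=
    integrable_sq_gauss (b_pos hσ)
  have := (h.comp_sub_right m).const_mul ((Real.sqrt (2 * Real.pi) * σ)⁻¹)
  refine this.congr (Filter.Eventually.of_forall fun t => ?_)
  simp only [Function.comp]
  ring

lemma integral_oneDim_sq (m : ℝ) :
    ∫ t, oneDim m σ t * (t - m) ^ 2 = σ ^ 2 := by
  simp only [oneDim_eq]
  have heq : ∀ t : ℝ, (Real.sqrt (2 * Real.pi) * σ)⁻¹ *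
      Real.exp (-(2 * σ ^ 2)⁻¹ * (t - m) ^ 2) * (t - m) ^ 2
      = (Real.sqrt (2 * Real.pi) * σ)⁻¹ *
        ((t - m) ^ 2 * Real.exp (-(2 * σ ^ 2)⁻¹ * (t - m) ^ 2)) := fun t => by ring
  simp only [heq]
  rw [integral_const_mul,
    show (∫ t : ℝ, (t - m) ^ 2 * Real.exp (-(2 * σ ^ 2)⁻¹ * (t - m) ^ 2))
      = ∫ t : ℝ, t ^ 2 * Real.exp (-(2 * σ ^ 2)⁻¹ * t ^ 2) from integral_sub_right_eq_self
        (fun t : ℝ => t ^ 2 * Real.exp (-(2 * σ ^ 2)⁻¹ * t ^ 2)) m,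
    integral_sq_gauss (b_pos hσ), sqrt_pi_div hσ]
  have h1 : Real.sqrt (2 * Real.pi) * σ ≠ 0 := by positivity
  field_simp

end OneDim

section Euclid
open Finset

variable {D : ℕ}

lemma euclid_integrable {g : Fin D → ℝ → ℝ} (hg : ∀ k, Integrable (g k)) :
    Integrable (fun x : EuclideanSpace ℝ (Fin D) => ∏ k, g k (x k)) := by
  have h1 : Integrable (fun x : Fin D → ℝ => ∏ k, g k (x k)) := Integrable.fintype_prod hg
  have h2 := ((EuclideanSpace.volume_preserving_symm_measurableEquiv_toLp (Fin D)).integrable_comp_emb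
    (MeasurableEquiv.measurableEmbedding _)
    (g := fun x : Fin D → ℝ => ∏ k, g k (x k)))
  exact h2.mpr h1

lemma euclid_integral (g : Fin D → ℝ → ℝ) :
    ∫ x : EuclideanSpace ℝ (Fin D), ∏ k, g k (x k) = ∏ k, ∫ t, g k t := by
  have h2 := (EuclideanSpace.volume_preserving_symm_measurableEquiv_toLp (Fin D)).integral_comp'
    (fun x : Fin D → ℝ => ∏ k, g k (x k))
  rw [show (∫ x : EuclideanSpace ℝ (Fin D), ∏ k, g k (x k))
    = ∫ x : Fin D → ℝ, ∏ k, g k (x k) from h2]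
  exact MeasureTheory.integral_fintype_prod_eq_prod _

lemma gaussDensity_eq_prod (μ : EuclideanSpace ℝ (Fin D)) {σ : ℝ} (hσ : 0 < σ)
    (x : EuclideanSpace ℝ (Fin D)) :
    gaussDensity μ σ x = ∏ k, oneDim (μ k) σ (x k) := by
  unfold gaussDensity oneDim
  rw [Finset.prod_mul_distrib, Finset.prod_const, Finset.card_univ, Fintype.card_fin,
    ← Real.exp_sum, inv_pow]
  congr 1
  rw [EuclideanSpace.norm_eq]
  rw [Real.sq_sqrt (by positivity)]
  rw [← Finset.sum_neg_distrib, Finset.sum_div]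
  congr 1
  exact Finset.sum_congr rfl fun k _ => by rw [PiLp.sub_apply, Real.norm_eq_abs, sq_abs]
end Euclid

section Moments
open Finset

variable {D : ℕ} (μ : EuclideanSpace ℝ (Fin D)) {σ : ℝ} (hσ : 0 < σ)

include hσ

lemma gaussDensity_nonneg (x : EuclideanSpace ℝ (Fin D)) : 0 ≤ gaussDensity μ σ x := by
  unfold gaussDensity
  have h1 : (0:ℝ) ≤ Real.sqrt (2 * Real.pi) * σ := mul_nonneg (Real.sqrt_nonneg _) hσ.le
  exact mul_nonneg (inv_nonneg.2 (pow_nonneg h1 D)) (Real.exp_nonneg _)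

omit hσ in
lemma continuous_gaussDensity : Continuous (gaussDensity μ σ) := by
  unfold gaussDensity
  have h : Continuous fun x : EuclideanSpace ℝ (Fin D) => -‖x - μ‖ ^ 2 / (2 * σ ^ 2) :=
    (((continuous_id.sub continuous_const).norm.pow 2).neg).div_const _
  exact continuous_const.mul (Real.continuous_exp.comp h)

lemma integrable_gaussDensity : Integrable (fun x => gaussDensity μ σ x) := by
  have h := euclid_integrable (g := fun j : Fin D => oneDim (μ j) σ)
    (fun j => integrable_oneDim hσ (μ j))
  exact h.congr (Filter.Eventually.of_forall fun x => (gaussDensity_eq_prod μ hσ x).symm)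

lemma integral_gaussDensity : ∫ x, gaussDensity μ σ x = 1 := by
  rw [integral_congr_ae (Filter.Eventually.of_forall fun x => gaussDensity_eq_prod μ hσ x),
    euclid_integral]
  simp [integral_oneDim hσ]

lemma upd_prod_eq (k : Fin D) (x : EuclideanSpace ℝ (Fin D)) :
    ∏ j, Function.update (fun j : Fin D => oneDim (μ j) σ) k
      (fun t => oneDim (μ k) σ t * (t - μ k) ^ 2) j (x j)
    = gaussDensity μ σ x * (x k - μ k) ^ 2 := by
  rw [gaussDensity_eq_prod μ hσ,
    ← Finset.mul_prod_erase Finset.univ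
      (fun j => Function.update (fun j : Fin D => oneDim (μ j) σ) k
        (fun t => oneDim (μ k) σ t * (t - μ k) ^ 2) j (x j)) (Finset.mem_univ k),
    ← Finset.mul_prod_erase Finset.univ (fun j => oneDim (μ j) σ (x j)) (Finset.mem_univ k)]
  have h : ∏ j ∈ Finset.univ.erase k,
      Function.update (fun j : Fin D => oneDim (μ j) σ) k
        (fun t => oneDim (μ k) σ t * (t - μ k) ^ 2) j (x j)
      = ∏ j ∈ Finset.univ.erase k, oneDim (μ j) σ (x j) :=
    Finset.prod_congr rfl fun j hj => by
      rw [Function.update_of_ne (Finset.ne_of_mem_erase hj)]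
  rw [h, Function.update_self]
  ring

lemma integrable_moment (k : Fin D) :
    Integrable (fun x : EuclideanSpace ℝ (Fin D) => gaussDensity μ σ x * (x k - μ k) ^ 2) := by
  have h := euclid_integrable (g := Function.update (fun j : Fin D => oneDim (μ j) σ) k
      (fun t => oneDim (μ k) σ t * (t - μ k) ^ 2)) (fun j => by
    rcases eq_or_ne j k with rfl | hj
    · rw [Function.update_self]; exact integrable_oneDim_sq hσ (μ j)
    · rw [Function.update_of_ne hj]; exact integrable_oneDim hσ (μ j))
  exact h.congr (Filter.Eventually.of_forall fun x => upd_prod_eq μ hσ k x)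

lemma integral_moment (k : Fin D) :
    ∫ x : EuclideanSpace ℝ (Fin D), gaussDensity μ σ x * (x k - μ k) ^ 2 = σ ^ 2 := by
  rw [integral_congr_ae (Filter.Eventually.of_forall fun x => (upd_prod_eq μ hσ k x).symm),
    euclid_integral]
  rw [Finset.prod_eq_single k (fun j _ hj => by
      rw [Function.update_of_ne hj]; exact integral_oneDim hσ (μ j))
    (fun h => absurd (Finset.mem_univ k) h)]
  rw [Function.update_self]
  exact integral_oneDim_sq hσ (μ k)

omit hσ in
lemma normsq_expand (x : EuclideanSpace ℝ (Fin D)) :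
    ‖x - μ‖ ^ 2 = ∑ k, (x k - μ k) ^ 2 := by
  rw [EuclideanSpace.norm_eq, Real.sq_sqrt (by positivity)]
  exact Finset.sum_congr rfl fun k _ => by rw [PiLp.sub_apply, Real.norm_eq_abs, sq_abs]

lemma integrable_gauss_normsq :
    Integrable (fun x : EuclideanSpace ℝ (Fin D) => gaussDensity μ σ x * ‖x - μ‖ ^ 2) := by
  have h : Integrable (fun x : EuclideanSpace ℝ (Fin D) =>
      ∑ k, gaussDensity μ σ x * (x k - μ k) ^ 2) :=
    integrable_finset_sum _ fun k _ => integrable_moment μ hσ k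
  exact h.congr (Filter.Eventually.of_forall fun x => by
    show ∑ k, gaussDensity μ σ x * (x k - μ k) ^ 2 = gaussDensity μ σ x * ‖x - μ‖ ^ 2
    rw [← Finset.mul_sum, ← normsq_expand μ x])

lemma integral_gauss_normsq :
    ∫ x : EuclideanSpace ℝ (Fin D), gaussDensity μ σ x * ‖x - μ‖ ^ 2 = D * σ ^ 2 := by
  have heq : ∀ x : EuclideanSpace ℝ (Fin D), gaussDensity μ σ x * ‖x - μ‖ ^ 2
      = ∑ k, gaussDensity μ σ x * (x k - μ k) ^ 2 := fun x => by
    rw [normsq_expand μ x, Finset.mul_sum]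
  rw [integral_congr_ae (Filter.Eventually.of_forall heq),
    integral_finset_sum _ fun k _ => integrable_moment μ hσ k]
  simp [integral_moment μ hσ]

lemma integrable_gauss_norm :
    Integrable (fun x : EuclideanSpace ℝ (Fin D) => gaussDensity μ σ x * ‖x - μ‖) := by
  refine Integrable.mono' ((integrable_gaussDensity μ hσ).add (integrable_gauss_normsq μ hσ))
    ((continuous_gaussDensity μ).mul (continuous_id.sub continuous_const).norm).aestronglyMeasurable
    (Filter.Eventually.of_forall fun x => ?_)
  have h0 := gaussDensity_nonneg μ hσ x
  have h1 : (0:ℝ) ≤ ‖x - μ‖ := norm_nonneg _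
  rw [Real.norm_of_nonneg (mul_nonneg h0 h1)]
  simp only [Pi.add_apply]
  nlinarith [sq_nonneg (‖x - μ‖ - 1), mul_nonneg h0 (sq_nonneg (‖x - μ‖ - 1))]

end Moments

/-- if `f` is differentiable with `L`-Lipschitz gradient and
`ξ ~ N(μ, σ²I_D)`, then `∇f(ξ)` is integrable and `‖E[∇f(ξ)] − ∇f(μ)‖ ≤ Lσ√D`. -/
theorem stmt_11 (D : ℕ) (f : EuclideanSpace ℝ (Fin D) → ℝ)
    (hf : Differentiable ℝ f) (L : ℝ)
    (hLip : ∀ x y : EuclideanSpace ℝ (Fin D), ‖gradient f x - gradient f y‖ ≤ L * ‖x - y‖)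
    (μ : EuclideanSpace ℝ (Fin D)) (σ : ℝ) (hσ : 0 < σ) :
    Integrable (fun x : EuclideanSpace ℝ (Fin D) => gaussDensity μ σ x • gradient f x)
      volume ∧
    ‖(∫ x, gaussDensity μ σ x • gradient f x) - gradient f μ‖ ≤ L * σ * Real.sqrt D := by
  set g := gradient f with hgdef
  rcases Nat.eq_zero_or_pos D with hD | hD0
  · subst hD
    have hzero : ∀ v : EuclideanSpace ℝ (Fin 0), v = 0 := fun v => Subsingleton.elim _ _
    have heq : (fun x : EuclideanSpace ℝ (Fin 0) => gaussDensity μ σ x • g x)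
        = fun _ => (0 : EuclideanSpace ℝ (Fin 0)) := funext fun x => hzero _
    constructor
    · rw [heq]; exact integrable_const 0
    · rw [heq]
      simp [hzero (g μ)]
  · -- L ≥ 0
    have hL0 : 0 ≤ L := by
      have h := hLip (EuclideanSpace.single ⟨0, hD0⟩ 1) 0
      have hn : ‖(EuclideanSpace.single (⟨0, hD0⟩ : Fin D) (1:ℝ)) - 0‖ = 1 := by
        rw [sub_zero, EuclideanSpace.norm_single]; norm_num
      rw [hn, mul_one] at h
      exact le_trans (norm_nonneg _) h
    have hgcont : Continuous g := by
      have hl : LipschitzWith (Real.toNNReal L) g := by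
        apply LipschitzWith.of_dist_le_mul
        intro x y
        rw [dist_eq_norm, dist_eq_norm]
        calc ‖g x - g y‖ ≤ L * ‖x - y‖ := hLip x y
          _ = Real.toNNReal L * dist x y := by
              rw [Real.coe_toNNReal L hL0, dist_eq_norm]
      exact hl.continuous
    have hρ_nonneg := gaussDensity_nonneg μ hσ
    have hρint := integrable_gaussDensity μ hσ
    have hρ1 := integral_gaussDensity μ hσ
    have hρnorm := integrable_gauss_norm μ hσ
    have hρnormsq := integrable_gauss_normsq μ hσ
    -- integrability of ρ • g
    have hbound : ∀ x, ‖gaussDensity μ σ x • g x‖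
        ≤ gaussDensity μ σ x * ‖g μ‖ + L * (gaussDensity μ σ x * ‖x - μ‖) := by
      intro x
      rw [norm_smul, Real.norm_of_nonneg (hρ_nonneg x)]
      have h2 : ‖g x‖ ≤ ‖g μ‖ + L * ‖x - μ‖ := by
        have h3 := hLip x μ
        have h4 := norm_sub_norm_le (g x) (g μ)
        linarith
      have h5 := mul_le_mul_of_nonneg_left h2 (hρ_nonneg x)
      nlinarith
    have hint : Integrable (fun x => gaussDensity μ σ x • g x) := by
      refine Integrable.mono' ((hρint.mul_const ‖g μ‖).add (hρnorm.const_mul L))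
        ((continuous_gaussDensity μ).smul hgcont).aestronglyMeasurable
        (Filter.Eventually.of_forall fun x => ?_)
      simpa using hbound x
    refine ⟨hint, ?_⟩
    have hconst : Integrable (fun x => gaussDensity μ σ x • g μ) := hρint.smul_const _
    have hsub : (∫ x, gaussDensity μ σ x • g x) - g μ
        = ∫ x, gaussDensity μ σ x • (g x - g μ) := by
      have h1 : ∫ x, gaussDensity μ σ x • (g x - g μ)
          = (∫ x, gaussDensity μ σ x • g x) - ∫ x, gaussDensity μ σ x • g μ := by
        simp_rw [smul_sub]
        exact integral_sub hint hconst
      rw [h1, integral_smul_const, hρ1, one_smul]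
    rw [hsub]
    -- key moment bound
    have hDpos : (0:ℝ) < Real.sqrt D := Real.sqrt_pos.2 (Nat.cast_pos.2 hD0)
    set t := σ * Real.sqrt D / 2 with ht
    have htpos : 0 < t := by positivity
    have hptw : ∀ x, gaussDensity μ σ x * ‖x - μ‖
        ≤ gaussDensity μ σ x * t + (4*t)⁻¹ * (gaussDensity μ σ x * ‖x - μ‖^2) := by
      intro x
      have h0 := hρ_nonneg x
      have key : ‖x - μ‖ ≤ t + ‖x - μ‖^2/(4*t) := by
        have h4t : (0:ℝ) < 4*t := by positivity
        rw [← sub_nonneg, show t + ‖x - μ‖^2/(4*t) - ‖x - μ‖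
          = (‖x - μ‖ - 2*t)^2 / (4*t) by field_simp; ring]
        positivity
      have h6 := mul_le_mul_of_nonneg_left key h0
      calc gaussDensity μ σ x * ‖x - μ‖
          ≤ gaussDensity μ σ x * (t + ‖x - μ‖^2/(4*t)) := h6
        _ = gaussDensity μ σ x * t + (4*t)⁻¹ * (gaussDensity μ σ x * ‖x - μ‖^2) := by
            field_simp
    have hM1 : ∫ x, gaussDensity μ σ x * ‖x - μ‖ ≤ σ * Real.sqrt D := by
      have hRHSint : Integrable (fun x => gaussDensity μ σ x * t
          + (4*t)⁻¹ * (gaussDensity μ σ x * ‖x - μ‖^2)) :=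
        (hρint.mul_const t).add (hρnormsq.const_mul _)
      have h7 := integral_mono hρnorm hRHSint hptw
      rw [integral_add (hρint.mul_const t) (hρnormsq.const_mul _),
        integral_mul_const, integral_const_mul, integral_gauss_normsq μ hσ, hρ1,
        one_mul] at h7
      have hDsq : Real.sqrt D * Real.sqrt D = (D:ℝ) := Real.mul_self_sqrt (Nat.cast_nonneg D)
      have hteq : t + (4*t)⁻¹ * ((D:ℝ) * σ^2) = σ * Real.sqrt D := by
        rw [ht]
        field_simp
        nlinarith [hDsq, hσ, hDpos]
      linarith
    have h2int : Integrable (fun x => gaussDensity μ σ x • (g x - g μ)) := by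
      simp_rw [smul_sub]
      exact hint.sub hconst
    calc ‖∫ x, gaussDensity μ σ x • (g x - g μ)‖
        ≤ ∫ x, ‖gaussDensity μ σ x • (g x - g μ)‖ := norm_integral_le_integral_norm _
      _ ≤ ∫ x, L * (gaussDensity μ σ x * ‖x - μ‖) := by
          refine integral_mono h2int.norm (hρnorm.const_mul L) fun x => ?_
          rw [norm_smul, Real.norm_of_nonneg (hρ_nonneg x)]
          calc gaussDensity μ σ x * ‖g x - g μ‖
              ≤ gaussDensity μ σ x * (L * ‖x - μ‖) :=
                mul_le_mul_of_nonneg_left (hLip x μ) (hρ_nonneg x)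
            _ = L * (gaussDensity μ σ x * ‖x - μ‖) := by ring
      _ = L * ∫ x, gaussDensity μ σ x * ‖x - μ‖ := integral_const_mul L _
      _ ≤ L * (σ * Real.sqrt D) := mul_le_mul_of_nonneg_left hM1 hL0
      _ = L * σ * Real.sqrt D := by ring
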